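/- Let Σ_A be a subshift of finite type on M symbols in which every periodic point has period at least k+1. Then any legal word of length k in Σ_A contains k pairwise distinct symbols, and two legal words of length k containing the same set of symbols must be equal. Consequently the number of legal words of length k is at most the binomial coefficient C(M, k). -/

import Mathlib

/-!
If positions `i ≤ j` of a point of `Σ_A` carry a backward transition `A (x j) (x i)`, repeating
the block `x i, …, x j` gives a periodic point of period `j - i + 1`. Hence a legal `k`-word
admits no transition from a symbol back to itself or to an earlier symbol. A repeated symbol
`w i = w j` would give one, from the predecessor of position `j` back to `i`. If `u` and `v` use
the same symbols, then `u = v ∘ σ` for a permutation `σ`; each transition `u t → u (t+1)` forces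
`σ t < σ (t+1)`, so `σ` is increasing and thus the identity. The count follows by sending a
word to its set of symbols.
-/

/-- The shift map on two-sided sequences over `M` symbols. -/
def shiftMap (M : ℕ) : (ℤ → Fin M) → (ℤ → Fin M) := fun x i => x (i + 1)

/-- The two-sided subshift of finite type associated to the 0-1 transition matrix `A`. -/
def SFT {M : ℕ} (A : Fin M → Fin M → Prop) : Set (ℤ → Fin M) :=
  {x | ∀ i : ℤ, A (x i) (x (i + 1))}

/-- The set of legal words of length `k` in the subshift `Σ_A`. -/
def legalWords {M : ℕ} (A : Fin M → Fin M → Prop) (k : ℕ) : Set (Fin k → Fin M) :=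
  {w | ∃ x ∈ SFT A, ∀ i : Fin k, x ((i : ℕ) : ℤ) = w i}

lemma shiftMap_iterate_apply (M p : ℕ) (x : ℤ → Fin M) (i : ℤ) :
    (shiftMap M)^[p] x i = x (i + p) := by
  induction p generalizing x with
  | zero => simp
  | succ n ih =>
    rw [Function.iterate_succ_apply, ih]
    simp only [shiftMap, Nat.cast_succ]
    ring_nf

def AllPeriodsGT {M : ℕ} (A : Fin M → Fin M → Prop) (k : ℕ) : Prop :=
  ∀ x ∈ SFT A, ∀ p : ℕ, 0 < p → (shiftMap M)^[p] x = x → k + 1 ≤ p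

namespace SFT

variable {M : ℕ} {A : Fin M → Fin M → Prop} {x : ℤ → Fin M}

theorem exists_periodic_of_rel (hx : x ∈ SFT A) (i : ℤ) (n : ℕ) (h : A (x (i + n)) (x i)) :
    ∃ y ∈ SFT A, (shiftMap M)^[n + 1] y = y := by
  have hp : (0 : ℤ) < n + 1 := by positivity
  refine ⟨fun m => x (i + m % (n + 1)), fun m => ?_, funext fun m => ?_⟩
  · have hr := Int.emod_nonneg m hp.ne'
    have hr' := Int.emod_lt_of_pos m hp
    change A (x (i + m % (n + 1))) (x (i + (m + 1) % (n + 1)))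
    rw [← Int.emod_add_emod m (n + 1) 1]
    rcases (show m % (n + 1) + 1 < n + 1 ∨ m % (n + 1) = n by omega) with hlt | heq
    · rw [Int.emod_eq_of_lt (by omega) hlt, ← add_assoc]
      exact hx _
    · rw [heq, Int.emod_self, add_zero]
      exact h
  · rw [shiftMap_iterate_apply]
    push_cast
    rw [Int.add_emod_right]

theorem le_of_rel {k : ℕ} (hk : AllPeriodsGT A k) (hx : x ∈ SFT A) (i : ℤ) (n : ℕ)
    (h : A (x (i + n)) (x i)) : k ≤ n := by
  obtain ⟨y, hy, hyn⟩ := exists_periodic_of_rel hx i n h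
  have := hk y hy (n + 1) n.succ_pos hyn
  omega

end SFT

namespace legalWords

variable {M k : ℕ} {A : Fin M → Fin M → Prop} {u v w : Fin k → Fin M}

theorem rel_of_covBy (hw : w ∈ legalWords A k) {s t : Fin k} (h : s ⋖ t) : A (w s) (w t) := by
  obtain ⟨x, hx, hxw⟩ := hw
  rw [Fin.covBy_iff, Nat.covBy_iff_add_one_eq] at h
  rw [← hxw, ← hxw, ← h]
  push_cast
  exact hx _

theorem not_rel_of_le (hk : AllPeriodsGT A k) (hw : w ∈ legalWords A k) {a b : Fin k}
    (hab : a ≤ b) : ¬ A (w b) (w a) := by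
  obtain ⟨x, hx, hxw⟩ := hw
  intro h
  rw [← hxw, ← hxw] at h
  have hab' : (a : ℕ) ≤ b := hab
  have := SFT.le_of_rel hk hx a (b - a) (by rwa [Nat.cast_sub hab', add_sub_cancel])
  omega

theorem injective (hk : AllPeriodsGT A k) (hw : w ∈ legalWords A k) : Function.Injective w := by
  refine Function.Injective.of_lt_imp_ne fun i j hij heq => ?_
  have hrel := rel_of_covBy hw (Order.pred_covBy_of_not_isMin (not_isMin_of_lt hij))
  rw [← heq] at hrel
  exact not_rel_of_le hk hw (Order.le_pred_of_lt hij) hrel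

theorem eq_of_range_eq (hk : AllPeriodsGT A k) (hu : u ∈ legalWords A k)
    (hv : v ∈ legalWords A k) (h : Set.range u = Set.range v) : u = v := by
  choose σ hσ using fun t => h ▸ Set.mem_range_self (f := u) t
  have hσ_mono : StrictMono σ := strictMono_of_lt_succ fun t ht => by
    have hcov := Order.covBy_succ_of_not_isMax ht
    have hne : σ t ≠ σ (Order.succ t) :=
      fun he => hcov.ne (injective hk hu (by rw [← hσ, ← hσ, he]))
    refine lt_of_le_of_ne (not_lt.mp fun hlt => ?_) hne
    exact not_rel_of_le hk hv hlt.le (by rw [hσ, hσ]; exact rel_of_covBy hu hcov)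
  funext t
  rw [← hσ t, hσ_mono.apply_eq]

end legalWords

theorem Set.ncard_le_choose_of_injOn_range {α : Type*} [Fintype α] {k : ℕ}
    {S : Set (Fin k → α)} (hinj : ∀ w ∈ S, Function.Injective w) (hrange : S.InjOn Set.range) :
    S.ncard ≤ (Fintype.card α).choose k := by
  classical
  calc S.ncard ≤ ((Finset.univ.powersetCard k : Finset (Finset α)) : Set (Finset α)).ncard :=
        Set.ncard_le_ncard_of_injOn (fun w => Finset.univ.image w)
          (fun w hw => by simp [Finset.card_image_of_injective _ (hinj w hw)])
          (fun u hu v hv huv => hrange hu hv <| by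
            simpa using congrArg (fun s : Finset α => (s : Set α)) huv)
          (Finset.finite_toSet _)
    _ = (Fintype.card α).choose k := by
        rw [Set.ncard_coe_finset, Finset.card_powersetCard, Finset.card_univ]

/-- **Words in subshifts without short periodic orbits.** If every periodic point of `Σ_A` has
period at least `k+1`, then every legal `k`-word has pairwise distinct symbols, a legal `k`-word
is determined by the set of symbols it contains, and consequently there are at most `C(M,k)`
legal `k`-words. -/
theorem sft_words_determined_by_symbols {M k : ℕ} (A : Fin M → Fin M → Prop)
    (hper : ∀ x ∈ SFT A, ∀ p : ℕ, 0 < p → (shiftMap M)^[p] x = x → k + 1 ≤ p) :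
    (∀ w ∈ legalWords A k, Function.Injective w) ∧
    (∀ u ∈ legalWords A k, ∀ v ∈ legalWords A k, Set.range u = Set.range v → u = v) ∧
    (legalWords A k).ncard ≤ Nat.choose M k := by
  have hinj : ∀ w ∈ legalWords A k, Function.Injective w :=
    fun w hw => legalWords.injective hper hw
  have hdet : (legalWords A k).InjOn Set.range :=
    fun u hu v hv => legalWords.eq_of_range_eq hper hu hv
  refine ⟨hinj, hdet, ?_⟩
  simpa using Set.ncard_le_choose_of_injOn_range hinj hdet
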